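/- arXiv:2601.15178 — 2 statements merged into one kernel-verified Lean document; each statement's English description precedes it below -/
import Mathlib

section
/- Let U, S be positive natural numbers, Ω = 2*U*S, and let k, u' be natural numbers with k < S and u' ≤ U. Then (S - k - 1) / ((U - u')*Ω + Ω² + S - k - 1) < (S - k) / (U*Ω + Ω² + S - k) as rational numbers. -/
/-- for positive naturals U, S, Ω = 2*U*S, k < S, u' ≤ U:
(S - k - 1)/((U - u')*Ω + Ω² + S - k - 1) < (S - k)/(U*Ω + Ω² + S - k) in ℚ. -/
theorem stmt_2 (U S Ω k u' : ℕ) (hU : 0 < U) (hS : 0 < S) (hΩ : Ω = 2 * U * S)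
    (hk : k < S) (hu : u' ≤ U) :
    ((S : ℚ) - k - 1) / (((U : ℚ) - u') * Ω + (Ω : ℚ) ^ 2 + S - k - 1) <
      ((S : ℚ) - k) / ((U : ℚ) * Ω + (Ω : ℚ) ^ 2 + S - k) := by
  have hU' : (1 : ℚ) ≤ U := by exact_mod_cast hU
  have hS' : (1 : ℚ) ≤ S := by exact_mod_cast hS
  have hk' : (k : ℚ) + 1 ≤ S := by exact_mod_cast hk
  have hu' : (u' : ℚ) ≤ U := by exact_mod_cast hu
  have hk0 : (0 : ℚ) ≤ k := by positivity
  have hΩ' : (Ω : ℚ) = 2 * U * S := by exact_mod_cast hΩ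
  have hΩpos : (0 : ℚ) < Ω := by rw [hΩ']; nlinarith
  have hd1 : (0 : ℚ) < ((U : ℚ) - u') * Ω + (Ω : ℚ) ^ 2 + S - k - 1 := by nlinarith
  have hd2 : (0 : ℚ) < (U : ℚ) * Ω + (Ω : ℚ) ^ 2 + S - k := by nlinarith
  rw [div_lt_div_iff₀ hd1 hd2]
  have h1 : ((S:ℚ)-k)*u' ≤ S*U :=
    mul_le_mul (by linarith) hu' (by positivity) (by linarith)
  have h2 : (Ω:ℚ)*(((S:ℚ)-k)*u') ≤ Ω*(S*U) := by nlinarith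
  have h3 : (Ω:ℚ)*(S*U) < Ω^2 := by rw [hΩ']; nlinarith
  nlinarith [h2, h3, mul_pos hΩpos (by linarith : (0:ℚ) < U)]
end

section
/- Let U be a finite set and S a finite collection of subsets of U. An interview consisting of a set Q ⊆ S of at most k questions (none being the private question), when asked to the 'null' candidate (who answers 0 to everything), rules out all 'element' candidate types if and only if ⋃_{A∈Q} A = U. Hence such an interview exists iff the Set Cover instance (U, S, k) is positive. -/
/-- an interview asking a set Q ⊆ S of at most k (non-private)
questions rules out all 'element' candidates when asked to the null candidate
iff ⋃_{A ∈ Q} A = U; hence such an interview exists iff the Set Cover instance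
(U, S, k) is positive. (Element candidate c_e is ruled out iff some asked
question A satisfies e ∈ A.) -/
theorem stmt_11 {α : Type*} [DecidableEq α] (U : Finset α) (S : Finset (Finset α))
    (k : ℕ) (hsub : ∀ A ∈ S, A ⊆ U) :
    (∀ Q ⊆ S, Q.card ≤ k →
      ((∀ e ∈ U, ∃ A ∈ Q, e ∈ A) ↔ Q.biUnion id = U)) ∧
    ((∃ Q ⊆ S, Q.card ≤ k ∧ ∀ e ∈ U, ∃ A ∈ Q, e ∈ A) ↔
      (∃ R ⊆ S, R.card ≤ k ∧ R.biUnion id = U)) := by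
  have key : ∀ Q ⊆ S, ((∀ e ∈ U, ∃ A ∈ Q, e ∈ A) ↔ Q.biUnion id = U) := by
    intro Q hQ
    constructor
    · intro h
      apply Finset.Subset.antisymm
      · intro x hx
        simp only [Finset.mem_biUnion, id] at hx
        obtain ⟨A, hA, hxA⟩ := hx
        exact hsub A (hQ hA) hxA
      · intro x hx
        obtain ⟨A, hA, hxA⟩ := h x hx
        simp only [Finset.mem_biUnion, id]
        exact ⟨A, hA, hxA⟩
    · intro h e he
      rw [← h] at he
      simpa using he
  refine ⟨fun Q hQ _ => key Q hQ, ?_⟩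
  constructor
  · rintro ⟨Q, hQ, hk, h⟩
    exact ⟨Q, hQ, hk, (key Q hQ).mp h⟩
  · rintro ⟨R, hR, hk, h⟩
    exact ⟨R, hR, hk, (key R hR).mpr h⟩
end
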